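/- Let n ≥ 1, s ∈ (1/2,1), η > 0, x ∈ ℝⁿ, and let u : ℝⁿ → ℝ be bounded and measurable on ℝⁿ, twice continuously differentiable on B_η(x), with ∇u(x) ≠ 0. Then, as r → 0⁺: u(x) = M_r^{s,∞} u(x) + c_s r^{2s} (-Δ)^s_∞ u(x) + O(r²), i.e. there exist C > 0 and r₀ > 0 such that |u(x) − M_r^{s,∞} u(x) − c_s r^{2s} (-Δ)^s_∞ u(x)| ≤ C r² for all r ∈ (0,r₀). -/

import Mathlib

open MeasureTheory Filter Real Set
open scoped Topology

noncomputable section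

def csInf (s : ℝ) : ℝ := (1 / 2) * (∫ ρ in Set.Ioi (1:ℝ), (ρ * (ρ ^ 2 - 1) ^ s)⁻¹)⁻¹

/-!
Write `z = ∇u(x)/|∇u(x)|`, `h(ρ) = 2u(x) - u(x+ρz) - u(x-ρz)`, `W(ρ) = ρ^{-1-2s}` and
`K_r(ρ) = ρ⁻¹(ρ²-r²)^{-s}` (`meanKernel s r`). Taylor's formula along the line through `x` in
direction `z`, together with the boundedness of `u`, gives `|h(ρ)| ≤ A ρ²` for all `ρ`. By scaling,
`K_r` has mass `r^{-2s} / (2 c_s)` on `(r, ∞)`, so the remainder is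
`c_s r^{2s} (∫_r^∞ h (K_r - W) - ∫_0^r h W)`. As `K_r ≥ W`, the first integral is at most
`A ∫_r^∞ ρ² (K_r - W) = A r^{2-2s} ∫_1^∞ t² (K_1 - W)`, again by scaling, and the second is at most
`A ∫_0^r ρ^{1-2s} = A r^{2-2s} / (2 - 2s)`. Multiplying by `r^{2s}` gives `O(r²)`.
-/

lemma IntegrableOn.of_homogeneous {f g : ℝ → ℝ} {r a : ℝ} (hr : 0 < r)
    (hfg : ∀ t ∈ Ioi (1 : ℝ), f (r * t) = r ^ a * g t) (hg : IntegrableOn g (Ioi 1)) :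
    IntegrableOn f (Ioi r) := by
  have hg' : IntegrableOn (fun t => r ^ a * g t) (Ioi 1) := hg.const_mul _
  have h : IntegrableOn (fun t => f (r * t)) (Ioi 1) :=
    hg'.congr_fun (fun t ht => (hfg t ht).symm) measurableSet_Ioi
  simpa using (integrableOn_Ioi_comp_mul_left_iff f 1 hr).mp h

lemma integral_Ioi_of_homogeneous {f g : ℝ → ℝ} {r a : ℝ} (hr : 0 < r)
    (hfg : ∀ t ∈ Ioi (1 : ℝ), f (r * t) = r ^ a * g t) :
    ∫ ρ in Ioi r, f ρ = r ^ (a + 1) * ∫ t in Ioi 1, g t := by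
  have h := integral_comp_mul_left_Ioi f 1 hr
  rw [mul_one, setIntegral_congr_fun measurableSet_Ioi hfg, integral_const_mul,
    smul_eq_mul, eq_inv_mul_iff_mul_eq₀ hr.ne'] at h
  rw [← h, rpow_add_one hr.ne']
  ring

def meanKernel (s r ρ : ℝ) : ℝ := ((ρ ^ 2 - r ^ 2) ^ s * ρ)⁻¹

section Kernel

variable {s : ℝ}

lemma meanKernel_mul_left {r t : ℝ} (hr : 0 < r) (ht : 1 < t) :
    meanKernel s r (r * t) = r ^ (-(1 + 2 * s)) * meanKernel s 1 t := by
  have ht2 : 0 ≤ t ^ 2 - 1 := by nlinarith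
  rw [meanKernel, meanKernel, show (r * t) ^ 2 - r ^ 2 = r ^ 2 * (t ^ 2 - 1) by ring,
    mul_rpow (by positivity) ht2, ← rpow_natCast, ← rpow_mul hr.le, rpow_neg hr.le,
    rpow_add hr, rpow_one, one_pow]
  push_cast
  field_simp

lemma inv_rpow_mul_left {r t : ℝ} (hr : 0 < r) (ht : 0 < t) :
    ((r * t) ^ (1 + 2 * s))⁻¹ = r ^ (-(1 + 2 * s)) * (t ^ (1 + 2 * s))⁻¹ := by
  rw [mul_rpow hr.le ht.le, rpow_neg hr.le, mul_inv]

lemma rpow_one_add_two_mul {t : ℝ} (ht : 0 < t) : t ^ (1 + 2 * s) = t * (t ^ 2) ^ s := by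
  rw [rpow_add ht, rpow_one, ← rpow_natCast, ← rpow_mul ht.le]
  norm_num

lemma inv_rpow_le_meanKernel (hs : 0 ≤ s) {r ρ : ℝ} (hr : 0 ≤ r) (hρ : r < ρ) :
    (ρ ^ (1 + 2 * s))⁻¹ ≤ meanKernel s r ρ := by
  have hρ0 : 0 < ρ := hr.trans_lt hρ
  have hd : 0 < ρ ^ 2 - r ^ 2 := by nlinarith
  apply inv_anti₀ (by positivity)
  calc (ρ ^ 2 - r ^ 2) ^ s * ρ ≤ (ρ ^ 2) ^ s * ρ := by
        gcongr
        linarith [sq_nonneg r]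
    _ = ρ ^ (1 + 2 * s) := by rw [rpow_one_add_two_mul hρ0, mul_comm]

lemma meanKernel_one_le_rpow_neg (hs : 0 ≤ s) {t : ℝ} (ht : 1 < t) :
    meanKernel s 1 t ≤ (t - 1) ^ (-s) := by
  have h1 : 0 < t - 1 := by linarith
  rw [meanKernel, rpow_neg h1.le, one_pow]
  apply inv_anti₀ (by positivity)
  calc (t - 1) ^ s ≤ (t ^ 2 - 1) ^ s := by gcongr; nlinarith
    _ ≤ (t ^ 2 - 1) ^ s * t := le_mul_of_one_le_right (rpow_nonneg (by nlinarith) _) ht.le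

lemma rpow_neg_sub_rpow_neg_le {a b : ℝ} (ha : 0 < a) (hab : a ≤ b) (hs : s ≤ 1) :
    a ^ (-s) - b ^ (-s) ≤ (b - a) * b ^ (-s) / a := by
  have hb : 0 < b := ha.trans_le hab
  have h : a * a ^ (-s) ≤ b * b ^ (-s) := by
    rw [mul_comm a, ← rpow_add_one ha.ne', mul_comm b, ← rpow_add_one hb.ne']
    gcongr
    linarith
  rw [le_div_iff₀ ha]
  nlinarith

lemma sq_mul_meanKernel_one_sub_le (hs1 : s ≤ 1) {t : ℝ} (ht : 2 ≤ t) :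
    t ^ 2 * (meanKernel s 1 t - (t ^ (1 + 2 * s))⁻¹) ≤ 2 * t ^ (-(1 + 2 * s)) := by
  have ht0 : 0 < t := by linarith
  have ha : 0 < t ^ 2 - 1 := by nlinarith
  have hb : 0 < t ^ 2 := by positivity
  have hab := rpow_neg_sub_rpow_neg_le ha (sub_le_self _ zero_le_one) hs1
  have hbs : 0 < (t ^ 2) ^ (-s) := rpow_pos_of_pos hb _
  calc t ^ 2 * (meanKernel s 1 t - (t ^ (1 + 2 * s))⁻¹)
      = t * ((t ^ 2 - 1) ^ (-s) - (t ^ 2) ^ (-s)) := by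
        rw [meanKernel, rpow_one_add_two_mul ht0, rpow_neg ha.le, rpow_neg hb.le, one_pow]
        field_simp
    _ ≤ t * ((t ^ 2 - (t ^ 2 - 1)) * (t ^ 2) ^ (-s) / (t ^ 2 - 1)) := by gcongr
    _ ≤ t * (2 * (t ^ 2) ^ (-s) / t ^ 2) := by
        gcongr ?_ * ?_
        rw [sub_sub_cancel, one_mul, div_le_div_iff₀ ha hb]
        nlinarith [mul_le_mul_of_nonneg_left (by nlinarith : (4 : ℝ) ≤ t ^ 2) hbs.le]
    _ = 2 * t ^ (-(1 + 2 * s)) := by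
        rw [rpow_neg ht0.le, rpow_one_add_two_mul ht0, rpow_neg hb.le]
        field_simp

lemma measurable_meanKernel (r : ℝ) : Measurable (meanKernel s r) := by
  unfold meanKernel
  fun_prop

lemma meanKernel_pos {r ρ : ℝ} (hr : 0 ≤ r) (hρ : r < ρ) : 0 < meanKernel s r ρ := by
  have hd : 0 < ρ ^ 2 - r ^ 2 := by nlinarith
  have hρ0 : 0 < ρ := hr.trans_lt hρ
  unfold meanKernel
  positivity

lemma integrableOn_meanKernel_one_Ioc (hs0 : 0 ≤ s) (hs1 : s < 1) :
    IntegrableOn (meanKernel s 1) (Ioc 1 2) := by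
  have hdom : IntegrableOn (fun t : ℝ => (t - 1) ^ (-s)) (Ioc 1 2) := by
    have h := (intervalIntegral.intervalIntegrable_rpow' (r := -s) (by linarith)
      (a := 0) (b := 1)).comp_sub_right 1
    rw [intervalIntegrable_iff_integrableOn_Ioc_of_le (by norm_num)] at h
    norm_num at h
    exact h
  refine hdom.mono' (measurable_meanKernel 1).aestronglyMeasurable ?_
  filter_upwards [ae_restrict_mem measurableSet_Ioc] with t ht
  rw [norm_of_nonneg (meanKernel_pos zero_le_one ht.1).le]
  exact meanKernel_one_le_rpow_neg hs0 ht.1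

lemma integrableOn_sq_mul_meanKernel_one_sub (hs0 : 0 < s) (hs1 : s < 1) :
    IntegrableOn (fun t => t ^ 2 * (meanKernel s 1 t - (t ^ (1 + 2 * s))⁻¹)) (Ioi 1) := by
  have hmeas : Measurable fun t : ℝ => t ^ 2 * (meanKernel s 1 t - (t ^ (1 + 2 * s))⁻¹) :=
    by unfold meanKernel; fun_prop
  have hnonneg : ∀ t ∈ Ioi (1 : ℝ), 0 ≤ meanKernel s 1 t - (t ^ (1 + 2 * s))⁻¹ := fun t ht =>
    sub_nonneg.mpr (inv_rpow_le_meanKernel hs0.le zero_le_one ht)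
  rw [← Ioc_union_Ioi_eq_Ioi one_le_two]
  refine IntegrableOn.union ?_ ?_
  · refine ((integrableOn_meanKernel_one_Ioc hs0.le hs1).const_mul 4).mono'
      hmeas.aestronglyMeasurable ?_
    filter_upwards [ae_restrict_mem measurableSet_Ioc] with t ⟨ht1, ht2⟩
    have hW : 0 ≤ (t ^ (1 + 2 * s))⁻¹ := inv_nonneg.mpr (rpow_nonneg (by linarith) _)
    rw [norm_of_nonneg (mul_nonneg (sq_nonneg t) (hnonneg t ht1))]
    have : t ^ 2 ≤ 4 := by nlinarith
    nlinarith [hnonneg t ht1]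
  · have hdom := (integrableOn_Ioi_rpow_of_lt (by linarith : -(1 + 2 * s) < -1) two_pos).const_mul 2
    refine hdom.mono' hmeas.aestronglyMeasurable ?_
    filter_upwards [ae_restrict_mem measurableSet_Ioi] with t (ht : 2 < t)
    rw [norm_of_nonneg (mul_nonneg (sq_nonneg t) (hnonneg t (one_lt_two.trans ht)))]
    exact sq_mul_meanKernel_one_sub_le hs1.le ht.le

lemma integrableOn_meanKernel_one (hs0 : 0 < s) (hs1 : s < 1) :
    IntegrableOn (meanKernel s 1) (Ioi 1) := by
  rw [← Ioc_union_Ioi_eq_Ioi one_le_two]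
  refine (integrableOn_meanKernel_one_Ioc hs0.le hs1).union ?_
  have hW : IntegrableOn (fun t : ℝ => (t ^ (1 + 2 * s))⁻¹) (Ioi 2) :=
    (integrableOn_Ioi_rpow_of_lt (by linarith : -(1 + 2 * s) < -1) two_pos).congr_fun
      (fun t (ht : 2 < t) => rpow_neg (by linarith) _) measurableSet_Ioi
  have hG := (integrableOn_sq_mul_meanKernel_one_sub hs0 hs1).mono_set
    (Ioi_subset_Ioi one_le_two)
  -- `K₁ ≤ W + t² (K₁ - W)` since `K₁ ≥ W` and `t² ≥ 1`
  refine (hW.add hG).mono' (measurable_meanKernel 1).aestronglyMeasurable ?_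
  filter_upwards [ae_restrict_mem measurableSet_Ioi] with t (ht : 2 < t)
  have hWK := inv_rpow_le_meanKernel hs0.le zero_le_one (one_lt_two.trans ht)
  rw [norm_of_nonneg (meanKernel_pos zero_le_one (one_lt_two.trans ht)).le]
  have : 1 ≤ t ^ 2 := by nlinarith
  simp only [Pi.add_apply]
  nlinarith

lemma integral_meanKernel_one_pos (hs0 : 0 < s) (hs1 : s < 1) :
    0 < ∫ t in Ioi 1, meanKernel s 1 t := by
  have hpos : ∀ t ∈ Ioi (1 : ℝ), 0 < meanKernel s 1 t := fun t ht =>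
    meanKernel_pos zero_le_one ht
  rw [setIntegral_pos_iff_support_of_nonneg_ae
    ((ae_restrict_mem measurableSet_Ioi).mono fun t ht => (hpos t ht).le)
    (integrableOn_meanKernel_one hs0 hs1)]
  rw [inter_eq_right.mpr fun t ht => Function.mem_support.mpr (hpos t ht).ne', volume_Ioi]
  exact ENNReal.zero_lt_top

lemma csInf_eq : csInf s = 1 / 2 * (∫ t in Ioi 1, meanKernel s 1 t)⁻¹ := by
  simp only [csInf, meanKernel, one_pow, mul_comm]

lemma csInf_pos (hs0 : 0 < s) (hs1 : s < 1) : 0 < csInf s := by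
  have := integral_meanKernel_one_pos hs0 hs1
  rw [csInf_eq]
  positivity

lemma csInf_mul_integral_meanKernel_one (hs0 : 0 < s) (hs1 : s < 1) :
    csInf s * ∫ t in Ioi 1, meanKernel s 1 t = 1 / 2 := by
  have := (integral_meanKernel_one_pos hs0 hs1).ne'
  rw [csInf_eq]
  field_simp

end Kernel

def meanKernelDefectMoment (s : ℝ) : ℝ :=
  ∫ t in Ioi 1, t ^ 2 * (meanKernel s 1 t - (t ^ (1 + 2 * s))⁻¹)

lemma meanKernelDefectMoment_nonneg {s : ℝ} (hs : 0 ≤ s) : 0 ≤ meanKernelDefectMoment s :=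
  setIntegral_nonneg measurableSet_Ioi fun t ht =>
    mul_nonneg (sq_nonneg t) (sub_nonneg.mpr (inv_rpow_le_meanKernel hs zero_le_one ht))

section Scaling

variable {s r : ℝ}

lemma sq_mul_meanKernel_sub_mul_left (hr : 0 < r) {t : ℝ} (ht : 1 < t) :
    (r * t) ^ 2 * (meanKernel s r (r * t) - ((r * t) ^ (1 + 2 * s))⁻¹)
      = r ^ (1 - 2 * s) * (t ^ 2 * (meanKernel s 1 t - (t ^ (1 + 2 * s))⁻¹)) := by
  rw [meanKernel_mul_left hr ht, inv_rpow_mul_left hr (zero_lt_one.trans ht),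
    show 1 - 2 * s = (2 : ℕ) + -(1 + 2 * s) by push_cast; ring, rpow_add hr, rpow_natCast]
  ring

lemma integrableOn_meanKernel (hs0 : 0 < s) (hs1 : s < 1) (hr : 0 < r) :
    IntegrableOn (meanKernel s r) (Ioi r) :=
  IntegrableOn.of_homogeneous hr (fun _ ht => meanKernel_mul_left hr ht)
    (integrableOn_meanKernel_one hs0 hs1)

lemma integral_meanKernel (hr : 0 < r) :
    ∫ ρ in Ioi r, meanKernel s r ρ = r ^ (-(2 * s)) * ∫ t in Ioi 1, meanKernel s 1 t := by
  rw [integral_Ioi_of_homogeneous hr (fun _ ht => meanKernel_mul_left hr ht)]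
  ring_nf

lemma csInf_mul_rpow_mul_integral_meanKernel (hs0 : 0 < s) (hs1 : s < 1) (hr : 0 < r) :
    csInf s * r ^ (2 * s) * ∫ ρ in Ioi r, meanKernel s r ρ = 1 / 2 := by
  have hr' : r ^ (2 * s) * r ^ (-(2 * s)) = 1 := by rw [← rpow_add hr, add_neg_cancel, rpow_zero]
  rw [integral_meanKernel hr, ← csInf_mul_integral_meanKernel_one hs0 hs1]
  linear_combination (csInf s * ∫ t in Ioi 1, meanKernel s 1 t) * hr'

lemma integrableOn_sq_mul_meanKernel_sub (hs0 : 0 < s) (hs1 : s < 1) (hr : 0 < r) :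
    IntegrableOn (fun ρ => ρ ^ 2 * (meanKernel s r ρ - (ρ ^ (1 + 2 * s))⁻¹)) (Ioi r) :=
  IntegrableOn.of_homogeneous hr (fun _ ht => sq_mul_meanKernel_sub_mul_left hr ht)
    (integrableOn_sq_mul_meanKernel_one_sub hs0 hs1)

lemma integral_sq_mul_meanKernel_sub (hr : 0 < r) :
    ∫ ρ in Ioi r, ρ ^ 2 * (meanKernel s r ρ - (ρ ^ (1 + 2 * s))⁻¹)
      = r ^ (2 - 2 * s) * meanKernelDefectMoment s := by
  rw [integral_Ioi_of_homogeneous hr (fun _ ht => sq_mul_meanKernel_sub_mul_left hr ht),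
    meanKernelDefectMoment, show 1 - 2 * s + 1 = 2 - 2 * s by ring]

end Scaling

lemma sq_div_rpow_one_add_two_mul {s ρ : ℝ} (hρ : 0 < ρ) :
    ρ ^ 2 / ρ ^ (1 + 2 * s) = ρ ^ (1 - 2 * s) := by
  rw [← rpow_natCast, ← rpow_sub hρ]
  norm_num
  ring_nf

lemma integrableOn_Ioc_zero_rpow {a b : ℝ} (ha : -1 < a) (hb : 0 ≤ b) :
    IntegrableOn (fun ρ : ℝ => ρ ^ a) (Ioc 0 b) :=
  (intervalIntegrable_iff_integrableOn_Ioc_of_le hb).mp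
    (intervalIntegral.intervalIntegrable_rpow' ha)

section Estimates

variable {s r A B : ℝ} {h : ℝ → ℝ}

lemma abs_div_rpow_le_of_abs_le_sq (hquad : ∀ ρ, |h ρ| ≤ A * ρ ^ 2) {ρ : ℝ} (hρ : 0 < ρ) :
    |h ρ / ρ ^ (1 + 2 * s)| ≤ A * ρ ^ (1 - 2 * s) := by
  rw [abs_div, abs_of_pos (rpow_pos_of_pos hρ _), ← sq_div_rpow_one_add_two_mul hρ,
    mul_div_assoc']
  exact div_le_div_of_nonneg_right (hquad ρ) (rpow_pos_of_pos hρ _).le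

lemma integrableOn_div_rpow (hs0 : 0 < s) (hs1 : s < 1) (hmeas : Measurable h)
    (hbdd : ∀ ρ, |h ρ| ≤ B) (hquad : ∀ ρ, |h ρ| ≤ A * ρ ^ 2) :
    IntegrableOn (fun ρ => h ρ / ρ ^ (1 + 2 * s)) (Ioi 0) := by
  have hmeas' : Measurable fun ρ => h ρ / ρ ^ (1 + 2 * s) := by fun_prop
  rw [← Ioc_union_Ioi_eq_Ioi zero_le_one]
  refine IntegrableOn.union ?_ ?_
  · have hdom := (integrableOn_Ioc_zero_rpow (a := 1 - 2 * s) (by linarith) zero_le_one).const_mul A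
    refine hdom.mono' hmeas'.aestronglyMeasurable ?_
    filter_upwards [ae_restrict_mem measurableSet_Ioc] with ρ hρ
    exact abs_div_rpow_le_of_abs_le_sq hquad hρ.1
  · have hdom := (integrableOn_Ioi_rpow_of_lt (by linarith : -(1 + 2 * s) < -1) one_pos).const_mul B
    refine hdom.mono' hmeas'.aestronglyMeasurable ?_
    filter_upwards [ae_restrict_mem measurableSet_Ioi] with ρ (hρ : 1 < ρ)
    have hρ0 : 0 < ρ := zero_lt_one.trans hρ
    rw [norm_eq_abs, abs_div, abs_of_pos (rpow_pos_of_pos hρ0 _), rpow_neg hρ0.le,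
      div_eq_mul_inv]
    exact mul_le_mul_of_nonneg_right (hbdd ρ) (by positivity)

lemma abs_integral_Ioc_div_rpow_le (hs1 : s < 1) (hr : 0 < r)
    (hquad : ∀ ρ, |h ρ| ≤ A * ρ ^ 2) :
    |∫ ρ in Ioc 0 r, h ρ / ρ ^ (1 + 2 * s)| ≤ A * (r ^ (2 - 2 * s) / (2 - 2 * s)) := by
  have hint : ∫ ρ in Ioc 0 r, ρ ^ (1 - 2 * s) = r ^ (2 - 2 * s) / (2 - 2 * s) := by
    rw [← intervalIntegral.integral_of_le hr.le, integral_rpow (Or.inl (by linarith)),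
      show 1 - 2 * s + 1 = 2 - 2 * s by ring, zero_rpow (by linarith), sub_zero]
  rw [← hint, ← integral_const_mul, ← norm_eq_abs]
  refine norm_integral_le_of_norm_le
    ((integrableOn_Ioc_zero_rpow (a := 1 - 2 * s) (by linarith) hr.le).const_mul A) ?_
  filter_upwards [ae_restrict_mem measurableSet_Ioc] with ρ hρ
  exact abs_div_rpow_le_of_abs_le_sq hquad hρ.1

lemma abs_mul_meanKernel_sub_le (hs0 : 0 ≤ s) (hr : 0 ≤ r) (hquad : ∀ ρ, |h ρ| ≤ A * ρ ^ 2)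
    {ρ : ℝ} (hρ : r < ρ) :
    |h ρ * (meanKernel s r ρ - (ρ ^ (1 + 2 * s))⁻¹)|
      ≤ A * (ρ ^ 2 * (meanKernel s r ρ - (ρ ^ (1 + 2 * s))⁻¹)) := by
  have hK := sub_nonneg.mpr (inv_rpow_le_meanKernel hs0 hr hρ)
  rw [abs_mul, abs_of_nonneg hK, ← mul_assoc]
  exact mul_le_mul_of_nonneg_right (hquad ρ) hK

lemma integrableOn_mul_meanKernel_sub (hs0 : 0 < s) (hs1 : s < 1) (hr : 0 < r)
    (hmeas : Measurable h) (hquad : ∀ ρ, |h ρ| ≤ A * ρ ^ 2) :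
    IntegrableOn (fun ρ => h ρ * (meanKernel s r ρ - (ρ ^ (1 + 2 * s))⁻¹)) (Ioi r) := by
  have hmeas' : Measurable fun ρ => h ρ * (meanKernel s r ρ - (ρ ^ (1 + 2 * s))⁻¹) := by
    unfold meanKernel; fun_prop
  refine ((integrableOn_sq_mul_meanKernel_sub hs0 hs1 hr).const_mul A).mono'
    hmeas'.aestronglyMeasurable ?_
  filter_upwards [ae_restrict_mem measurableSet_Ioi] with ρ hρ
  exact abs_mul_meanKernel_sub_le hs0.le hr.le hquad hρ

lemma abs_integral_mul_meanKernel_sub_le (hs0 : 0 < s) (hs1 : s < 1) (hr : 0 < r)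
    (hquad : ∀ ρ, |h ρ| ≤ A * ρ ^ 2) :
    |∫ ρ in Ioi r, h ρ * (meanKernel s r ρ - (ρ ^ (1 + 2 * s))⁻¹)|
      ≤ A * (r ^ (2 - 2 * s) * meanKernelDefectMoment s) := by
  rw [← integral_sq_mul_meanKernel_sub hr, ← integral_const_mul, ← norm_eq_abs]
  refine norm_integral_le_of_norm_le
    ((integrableOn_sq_mul_meanKernel_sub hs0 hs1 hr).const_mul A) ?_
  filter_upwards [ae_restrict_mem measurableSet_Ioi] with ρ hρ
  exact abs_mul_meanKernel_sub_le hs0.le hr.le hquad hρ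

end Estimates

lemma integral_two_mul_sub_mul_meanKernel {s r A B : ℝ} {h : ℝ → ℝ} (hs0 : 0 < s)
    (hs1 : s < 1) (hr : 0 < r) (hmeas : Measurable h) (hbdd : ∀ ρ, |h ρ| ≤ B)
    (hquad : ∀ ρ, |h ρ| ≤ A * ρ ^ 2) (a : ℝ) :
    ∫ ρ in Ioi r, (2 * a - h ρ) * meanKernel s r ρ
      = 2 * a * (∫ ρ in Ioi r, meanKernel s r ρ)
        - ((∫ ρ in Ioi r, h ρ * (meanKernel s r ρ - (ρ ^ (1 + 2 * s))⁻¹))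
          + ∫ ρ in Ioi r, h ρ / ρ ^ (1 + 2 * s)) := by
  have hD := integrableOn_mul_meanKernel_sub hs0 hs1 hr hmeas hquad
  have hW := (integrableOn_div_rpow hs0 hs1 hmeas hbdd hquad).mono_set (Ioi_subset_Ioi hr.le)
  have hsum : IntegrableOn (fun ρ => h ρ * (meanKernel s r ρ - (ρ ^ (1 + 2 * s))⁻¹)
      + h ρ / ρ ^ (1 + 2 * s)) (Ioi r) := hD.add hW
  have hsplit : ∀ ρ ∈ Ioi r, (2 * a - h ρ) * meanKernel s r ρ = 2 * a * meanKernel s r ρ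
      - (h ρ * (meanKernel s r ρ - (ρ ^ (1 + 2 * s))⁻¹) + h ρ / ρ ^ (1 + 2 * s)) := by
    intro ρ _
    rw [div_eq_mul_inv]
    ring
  rw [setIntegral_congr_fun measurableSet_Ioi hsplit,
    integral_sub ((integrableOn_meanKernel hs0 hs1 hr).const_mul _) hsum,
    integral_add hD hW, integral_const_mul]

lemma integral_Ioi_zero_div_rpow {s r A B : ℝ} {h : ℝ → ℝ} (hs0 : 0 < s) (hs1 : s < 1)
    (hr : 0 < r) (hmeas : Measurable h) (hbdd : ∀ ρ, |h ρ| ≤ B)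
    (hquad : ∀ ρ, |h ρ| ≤ A * ρ ^ 2) :
    ∫ ρ in Ioi 0, h ρ / ρ ^ (1 + 2 * s)
      = (∫ ρ in Ioc 0 r, h ρ / ρ ^ (1 + 2 * s)) + ∫ ρ in Ioi r, h ρ / ρ ^ (1 + 2 * s) := by
  have hW := integrableOn_div_rpow hs0 hs1 hmeas hbdd hquad
  rw [← Ioc_union_Ioi_eq_Ioi hr.le, setIntegral_union (Ioc_disjoint_Ioi le_rfl)
    measurableSet_Ioi (hW.mono_set Ioc_subset_Ioi_self) (hW.mono_set (Ioi_subset_Ioi hr.le))]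

theorem abs_sub_integral_meanKernel_sub_le {s r A B : ℝ} {h : ℝ → ℝ} (hs0 : 0 < s) (hs1 : s < 1)
    (hr : 0 < r) (hmeas : Measurable h) (hbdd : ∀ ρ, |h ρ| ≤ B)
    (hquad : ∀ ρ, |h ρ| ≤ A * ρ ^ 2) (a : ℝ) :
    |a - csInf s * r ^ (2 * s) * (∫ ρ in Ioi r, (2 * a - h ρ) * meanKernel s r ρ)
        - csInf s * r ^ (2 * s) * ∫ ρ in Ioi 0, h ρ / ρ ^ (1 + 2 * s)|
      ≤ csInf s * A * (meanKernelDefectMoment s + 1 / (2 - 2 * s)) * r ^ 2 := by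
  set D := ∫ ρ in Ioi r, h ρ * (meanKernel s r ρ - (ρ ^ (1 + 2 * s))⁻¹)
  set E := ∫ ρ in Ioc 0 r, h ρ / ρ ^ (1 + 2 * s)
  have hmass := csInf_mul_rpow_mul_integral_meanKernel hs0 hs1 hr
  have hc : 0 < csInf s * r ^ (2 * s) := mul_pos (csInf_pos hs0 hs1) (rpow_pos_of_pos hr _)
  have hr2 : r ^ (2 * s) * r ^ (2 - 2 * s) = r ^ 2 := by
    rw [← rpow_add hr, add_sub_cancel, rpow_two]
  calc _ = |csInf s * r ^ (2 * s) * (D - E)| := by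
        rw [integral_two_mul_sub_mul_meanKernel hs0 hs1 hr hmeas hbdd hquad,
          integral_Ioi_zero_div_rpow hs0 hs1 hr hmeas hbdd hquad]
        congr 1
        linear_combination (-2 * a) * hmass
    _ ≤ csInf s * r ^ (2 * s) * (|D| + |E|) := by
        rw [abs_mul, abs_of_pos hc]
        exact mul_le_mul_of_nonneg_left (abs_sub _ _) hc.le
    _ ≤ csInf s * r ^ (2 * s) * (A * (r ^ (2 - 2 * s) * meanKernelDefectMoment s)
          + A * (r ^ (2 - 2 * s) / (2 - 2 * s))) := by
        gcongr
        · exact abs_integral_mul_meanKernel_sub_le hs0 hs1 hr hquad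
        · exact abs_integral_Ioc_div_rpow_le hs1 hr hquad
    _ = _ := by
        rw [← hr2]
        ring

section SecondDifference

variable {g : ℝ → ℝ}

lemma exists_abs_two_mul_sub_le_mul_sq_local (hg : ContDiffAt ℝ 2 g 0) :
    ∃ L δ : ℝ, 0 < δ ∧ ∀ ρ ∈ Icc 0 δ, |2 * g 0 - g ρ - g (-ρ)| ≤ L * ρ ^ 2 := by
  obtain ⟨K, U, hU, hLip⟩ := (hg.derivWithin (m := 1) (by norm_num)).exists_lipschitzOnWith
  have hdiff : ∀ᶠ t in 𝓝 (0 : ℝ), DifferentiableAt ℝ g t :=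
    (hg.eventually (by simp)).mono fun t ht => ht.differentiableAt (by norm_num)
  obtain ⟨δ, hδ, hball⟩ := Metric.mem_nhds_iff.mp (inter_mem hU hdiff)
  refine ⟨2 * K, δ / 2, half_pos hδ, fun ρ ⟨hρ0, hρδ⟩ => ?_⟩
  have hmem : ∀ t, |t| ≤ ρ → t ∈ U ∧ DifferentiableAt ℝ g t := fun t ht =>
    hball (by rw [Metric.mem_ball, dist_zero_right, norm_eq_abs]; linarith)
  have hmem' : ∀ t ∈ Icc 0 ρ, |t| ≤ ρ ∧ |-t| ≤ ρ := fun t ⟨ht0, htρ⟩ => by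
    rw [abs_neg, abs_of_nonneg ht0]
    exact ⟨htρ, htρ⟩
  have hderiv : ∀ t ∈ Icc 0 ρ, HasDerivWithinAt (fun t => g t + g (-t))
      (deriv g t - deriv g (-t)) (Icc 0 ρ) t := by
    intro t ht
    have h1 := (hmem t (hmem' t ht).1).2.hasDerivAt
    have h2 : HasDerivAt (fun t => g (-t)) (deriv g (-t) * -1) t :=
      (hmem (-t) (hmem' t ht).2).2.hasDerivAt.comp t (hasDerivAt_neg t)
    exact (h1.add h2).hasDerivWithinAt.congr_deriv (by ring)
  have hbound : ∀ t ∈ Icc 0 ρ, ‖deriv g t - deriv g (-t)‖ ≤ 2 * K * ρ := by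
    intro t ht
    have hLt := hLip.dist_le_mul t (hmem t (hmem' t ht).1).1 (-t) (hmem (-t) (hmem' t ht).2).1
    rw [dist_eq_norm, Real.dist_eq, sub_neg_eq_add] at hLt
    calc _ ≤ K * |t + t| := hLt
      _ ≤ 2 * K * ρ := by
        rw [abs_of_nonneg (by linarith [ht.1])]
        nlinarith [ht.2, K.2]
  have hmvt := (convex_Icc 0 ρ).norm_image_sub_le_of_norm_hasDerivWithin_le hderiv hbound
    (left_mem_Icc.mpr hρ0) (right_mem_Icc.mpr hρ0)
  rw [neg_zero, sub_zero, norm_eq_abs, norm_eq_abs, abs_of_nonneg hρ0, abs_sub_comm] at hmvt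
  calc |2 * g 0 - g ρ - g (-ρ)| = |g 0 + g 0 - (g ρ + g (-ρ))| := by ring_nf
    _ ≤ 2 * K * ρ * ρ := hmvt
    _ = 2 * K * ρ ^ 2 := by ring

lemma abs_two_mul_sub_le {M : ℝ} (hbdd : ∀ t, |g t| ≤ M) (ρ : ℝ) :
    |2 * g 0 - g ρ - g (-ρ)| ≤ 4 * M := by
  have h0 := abs_le.mp (hbdd 0)
  have h1 := abs_le.mp (hbdd ρ)
  have h2 := abs_le.mp (hbdd (-ρ))
  rw [abs_le]
  constructor <;> linarith

lemma exists_abs_two_mul_sub_le_mul_sq (hg : ContDiffAt ℝ 2 g 0) {M : ℝ}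
    (hbdd : ∀ t, |g t| ≤ M) :
    ∃ A > 0, ∀ ρ, |2 * g 0 - g ρ - g (-ρ)| ≤ A * ρ ^ 2 := by
  obtain ⟨L, δ, hδ, hL⟩ := exists_abs_two_mul_sub_le_mul_sq_local hg
  have hM : 0 ≤ M := (abs_nonneg _).trans (hbdd 0)
  refine ⟨|L| + 4 * M / δ ^ 2 + 1, by positivity, fun ρ => ?_⟩
  wlog hρ : 0 ≤ ρ generalizing ρ
  · simpa [sub_right_comm _ (g ρ)] using this (-ρ) (by linarith)
  rcases le_or_gt ρ δ with hρδ | hδρ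
  · calc _ ≤ L * ρ ^ 2 := hL ρ ⟨hρ, hρδ⟩
      _ ≤ (|L| + 4 * M / δ ^ 2 + 1) * ρ ^ 2 := by
        gcongr
        linarith [le_abs_self L, div_nonneg (by linarith : 0 ≤ 4 * M) (sq_nonneg δ)]
  · calc _ ≤ 4 * M := abs_two_mul_sub_le hbdd ρ
      _ = 4 * M / δ ^ 2 * δ ^ 2 := by field_simp
      _ ≤ (|L| + 4 * M / δ ^ 2 + 1) * ρ ^ 2 := by
        gcongr
        linarith [abs_nonneg L]

end SecondDifference

theorem exists_abs_sub_integral_meanKernel_sub_le_mul_sq {s : ℝ} (hs0 : 0 < s) (hs1 : s < 1)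
    {g : ℝ → ℝ} (hmeas : Measurable g) (hbdd : ∃ M, ∀ t, |g t| ≤ M) (hg : ContDiffAt ℝ 2 g 0) :
    ∃ C > 0, ∀ r > 0,
      |g 0 - csInf s * r ^ (2 * s) * (∫ ρ in Ioi r, (g ρ + g (-ρ)) * meanKernel s r ρ)
        - csInf s * r ^ (2 * s) * ∫ ρ in Ioi 0, (2 * g 0 - g ρ - g (-ρ)) / ρ ^ (1 + 2 * s)|
      ≤ C * r ^ 2 := by
  obtain ⟨M, hM⟩ := hbdd
  obtain ⟨A, hA, hquad⟩ := exists_abs_two_mul_sub_le_mul_sq hg hM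
  have hC : 0 < csInf s * A * (meanKernelDefectMoment s + 1 / (2 - 2 * s)) := by
    have := meanKernelDefectMoment_nonneg hs0.le
    have := csInf_pos hs0 hs1
    have : 0 < 2 - 2 * s := by linarith
    positivity
  refine ⟨_, hC, fun r hr => ?_⟩
  have := abs_sub_integral_meanKernel_sub_le hs0 hs1 hr (by fun_prop) (abs_two_mul_sub_le hM)
    hquad (g 0)
  have hmean : ∀ ρ, 2 * g 0 - (2 * g 0 - g ρ - g (-ρ)) = g ρ + g (-ρ) := fun ρ => by ring
  simpa only [hmean] using this

theorem infinity_fractional_expansion_general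
    (n : ℕ) (s : ℝ) (hs : s ∈ Set.Ioo (1/2 : ℝ) 1)
    (η : ℝ) (hη : 0 < η) (x : EuclideanSpace ℝ (Fin n))
    (u : EuclideanSpace ℝ (Fin n) → ℝ)
    (hubd : ∃ M : ℝ, ∀ y, |u y| ≤ M) (humeas : Measurable u)
    (hu2 : ContDiffOn ℝ 2 u (Metric.ball x η)) :
    ∃ C > (0:ℝ), ∃ r₀ > (0:ℝ), ∀ r ∈ Set.Ioo (0:ℝ) r₀,
      |u x -
          csInf s * r ^ (2 * s) *
            (∫ ρ in Set.Ioi r,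
              (u (x + ρ • (‖gradient u x‖⁻¹ • gradient u x)) +
                  u (x - ρ • (‖gradient u x‖⁻¹ • gradient u x))) *
                ((ρ ^ 2 - r ^ 2) ^ s * ρ)⁻¹) -
          csInf s * r ^ (2 * s) *
            (∫ ρ in Set.Ioi (0:ℝ),
              (2 * u x - u (x + ρ • (‖gradient u x‖⁻¹ • gradient u x)) -
                  u (x - ρ • (‖gradient u x‖⁻¹ • gradient u x))) / ρ ^ (1 + 2 * s))|
        ≤ C * r ^ 2 := by
  set z := ‖gradient u x‖⁻¹ • gradient u x
  have hux : ContDiffAt ℝ 2 u (x + (0 : ℝ) • z) := by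
    rw [zero_smul, add_zero]
    exact hu2.contDiffAt (Metric.isOpen_ball.mem_nhds (Metric.mem_ball_self hη))
  obtain ⟨M, hM⟩ := hubd
  obtain ⟨C, hC, hbound⟩ := exists_abs_sub_integral_meanKernel_sub_le_mul_sq
    (by linarith [hs.1]) hs.2 (g := fun t => u (x + t • z)) (by fun_prop)
    ⟨M, fun t => hM _⟩ (hux.comp 0 (by fun_prop))
  refine ⟨C, hC, 1, one_pos, fun r hr => ?_⟩
  simpa only [zero_smul, add_zero, neg_smul, ← sub_eq_add_neg, meanKernel] using hbound r hr.1

/-- For `u` bounded, measurable, `C²` near `x` and `∇u(x) ≠ 0`, with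
`z(x) = ∇u(x)/|∇u(x)|`:  `u(x) = M_r^{s,∞}u(x) + c_s r^{2s} (-Δ)^s_∞ u(x) + O(r²)`
as `r → 0⁺`. -/
theorem infinity_fractional_expansion
    (n : ℕ) (hn : 1 ≤ n) (s : ℝ) (hs : s ∈ Set.Ioo (1/2 : ℝ) 1)
    (η : ℝ) (hη : 0 < η) (x : EuclideanSpace ℝ (Fin n))
    (u : EuclideanSpace ℝ (Fin n) → ℝ)
    (hubd : ∃ M : ℝ, ∀ y, |u y| ≤ M) (humeas : Measurable u)
    (hu2 : ContDiffOn ℝ 2 u (Metric.ball x η))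
    (hgrad : gradient u x ≠ 0) :
    ∃ C > (0:ℝ), ∃ r₀ > (0:ℝ), ∀ r ∈ Set.Ioo (0:ℝ) r₀,
      |u x -
          csInf s * r ^ (2 * s) *
            (∫ ρ in Set.Ioi r,
              (u (x + ρ • (‖gradient u x‖⁻¹ • gradient u x)) +
                  u (x - ρ • (‖gradient u x‖⁻¹ • gradient u x))) *
                ((ρ ^ 2 - r ^ 2) ^ s * ρ)⁻¹) -
          csInf s * r ^ (2 * s) *
            (∫ ρ in Set.Ioi (0:ℝ),
              (2 * u x - u (x + ρ • (‖gradient u x‖⁻¹ • gradient u x)) -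
                  u (x - ρ • (‖gradient u x‖⁻¹ • gradient u x))) / ρ ^ (1 + 2 * s))|
        ≤ C * r ^ 2 :=
  infinity_fractional_expansion_general n s hs η hη x u hubd humeas hu2
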